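/- arXiv:1606.01725 — 2 statements merged into one kernel-verified Lean document; each statement's English description precedes it below -/
import Mathlib

section
/- Let V = {V_{mn}} and V' = {V'_{mn}} be two double arrays of independent random variables in a real separable Banach space (or ℝ) such that V and V' are independent copies of each other, and set S*_{mn} = ∑_{i=1}^m ∑_{j=1}^n (V_{ij} − V'_{ij}). If S*_{mn}/(m^α n^β) → 0 a.s. as m ∨ n → ∞ and S_{mn}/(m^α n^β) → 0 in probability as m ∨ n → ∞, then S_{mn}/(m^α n^β) → 0 a.s. as m ∨ n → ∞ (and conversely, a.s. convergence of S_{mn}/(m^α n^β) implies both conditions). -/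
/-!
Conditioning on the copy `V'`: by independence and Fubini, for almost every `ω` the partial sums
satisfy `S(ω) - S'(ω') = o(m^α n^β)` for almost every `ω'`. If `S(ω)` were not `o(m^α n^β)`, it
would be large along indices tending to infinity; since `S'` has the law of `S` and `S → 0` in
probability, almost every `S'(ω')` is frequently small along those indices, which contradicts the
bound on the difference. The converse is the triangle inequality together with the fact that
almost sure convergence implies convergence in probability.
-/

open MeasureTheory ProbabilityTheory Finset Filter Asymptotics Topology
open scoped ENNReal

section LittleO

variable {ι E : Type*} [NormedAddCommGroup E] {l : Filter ι}

lemma isLittleO_iff_forall_lt {f : ι → E} {b : ι → ℝ} (hb : ∀ᶠ i in l, 0 < b i) :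
    f =o[l] b ↔ ∀ ε > 0, ∀ᶠ i in l, ‖f i‖ < ε * b i := by
  constructor
  · intro h ε hε
    filter_upwards [h.def (half_pos hε), hb] with i hi hbi
    rw [Real.norm_of_nonneg hbi.le] at hi
    linarith [mul_lt_mul_of_pos_right (half_lt_self hε) hbi]
  · refine fun h => isLittleO_iff.2 fun ε hε => ?_
    filter_upwards [h ε hε, hb] with i hi hbi
    rw [Real.norm_of_nonneg hbi.le]
    exact hi.le

lemma measurableSet_setOf_isLittleO [MeasurableSpace E] [OpensMeasurableSpace E] [Countable ι]
    [l.IsCountablyGenerated] {X : Type*} [MeasurableSpace X] {f : X → ι → E} (hf : Measurable f)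
    (b : ι → ℝ) : MeasurableSet {x | f x =o[l] b} := by
  obtain ⟨s, hs⟩ := l.exists_antitone_basis
  have hset : {x | f x =o[l] b} =
      ⋂ k : ℕ, ⋃ N : ℕ, ⋂ i ∈ s N, {x | (k : ℝ) * ‖f x i‖ ≤ ‖b i‖} := by
    ext x
    simp only [Set.mem_ofPred_eq, Set.mem_iInter, Set.mem_iUnion, isLittleO_iff_nat_mul_le,
      hs.1.eventually_iff, true_and]
  rw [hset]
  refine .iInter fun k => .iUnion fun N => .biInter (Set.to_countable _) fun i _ => ?_
  exact measurableSet_le (((measurable_pi_apply i).comp hf).norm.const_mul _) measurable_const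

end LittleO

lemma ae_frequently_notMem_of_tendsto_measure_zero {X ι : Type*} [MeasurableSpace X]
    {ν : Measure X} {l : Filter ι} [l.IsCountablyGenerated] [l.NeBot] {C : ι → Set X}
    (h : Tendsto (fun i => ν (C i)) l (𝓝 0)) :
    ∀ᵐ x ∂ν, ∃ᶠ i in l, x ∉ C i := by
  obtain ⟨s, hs⟩ := l.exists_antitone_basis
  have hset : {x | ¬∃ᶠ i in l, x ∉ C i} = ⋃ N, ⋂ i ∈ s N, C i := by
    ext x
    simp only [Set.mem_ofPred_eq, not_frequently, not_not, hs.1.eventually_iff, true_and,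
      Set.mem_iUnion, Set.mem_iInter]
  rw [ae_iff, hset, measure_iUnion_null_iff]
  intro N
  refine nonpos_iff_eq_zero.1 (ge_of_tendsto h ?_)
  filter_upwards [hs.mem N] with i hi
  exact measure_mono (Set.biInter_subset_of_mem hi)

section Desymmetrization

variable {ι E : Type*} [NormedAddCommGroup E] [MeasurableSpace E] {l : Filter ι}
  [l.IsCountablyGenerated] {b : ι → ℝ}

theorem isLittleO_of_ae_isLittleO_sub {ν : Measure (ι → E)} [NeZero ν] {f : ι → E}
    (hsub : ∀ᵐ y ∂ν, (f - y) =o[l] b)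
    (hprob : ∀ ε > 0, Tendsto (fun i => ν {y | ε * ‖b i‖ < ‖y i‖}) l (𝓝 0)) :
    f =o[l] b := by
  refine isLittleO_iff.2 fun ε hε => ?_
  by_contra hf
  have hbig : ∃ᶠ i in l, ε * ‖b i‖ < ‖f i‖ := by simpa [not_eventually] using hf
  set l' := l ⊓ 𝓟 {i | ε * ‖b i‖ < ‖f i‖}
  have : l'.NeBot := frequently_iff_neBot.1 hbig
  have hsmall : ∀ᵐ y ∂ν, ∃ᶠ i in l', ‖y i‖ ≤ ε / 2 * ‖b i‖ := by
    simpa using ae_frequently_notMem_of_tendsto_measure_zero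
      ((hprob (ε / 2) (half_pos hε)).mono_left inf_le_left)
  obtain ⟨y, hy_sub, hy_small⟩ := (hsub.and hsmall).exists
  have hclose : ∀ᶠ i in l', ‖f i - y i‖ ≤ ε / 2 * ‖b i‖ :=
    (hy_sub.def (half_pos hε)).filter_mono inf_le_left
  have hfar : ∀ᶠ i in l', ε * ‖b i‖ < ‖f i‖ := mem_inf_of_right (mem_principal_self _)
  obtain ⟨i, hi_small, hi_close, hi_far⟩ := (hy_small.and_eventually (hclose.and hfar)).exists
  linarith [norm_le_norm_sub_add (f i) (y i)]

variable [OpensMeasurableSpace E]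

lemma measurableSet_lt_norm_apply (c : ℝ) (i : ι) : MeasurableSet {y : ι → E | c < ‖y i‖} :=
  measurableSet_lt measurable_const (measurable_pi_apply i).norm

lemma tendsto_measure_lt_norm_of_ae_isLittleO {ν : Measure (ι → E)} [IsFiniteMeasure ν]
    (h : ∀ᵐ y ∂ν, y =o[l] b) {ε : ℝ} (hε : 0 < ε) :
    Tendsto (fun i => ν {y | ε * ‖b i‖ < ‖y i‖}) l (𝓝 0) := by
  rw [← measure_empty (μ := ν)]
  refine tendsto_measure_of_ae_tendsto_indicator_of_isFiniteMeasure l .empty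
    (fun i => measurableSet_lt_norm_apply _ i) ?_
  filter_upwards [h] with y hy
  filter_upwards [hy.def hε] with i hi
  simpa using hi

theorem ae_isLittleO_iff_of_indepFun_of_identDistrib [MeasurableSub₂ E] [Countable ι]
    {Ω : Type*} [MeasurableSpace Ω] {μ : Measure Ω} [IsProbabilityMeasure μ]
    {Z Z' : Ω → ι → E} (hind : IndepFun Z Z' μ) (hid : IdentDistrib Z Z' μ μ) :
    (∀ᵐ ω ∂μ, Z ω =o[l] b) ↔
      (∀ᵐ ω ∂μ, (Z ω - Z' ω) =o[l] b) ∧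
        ∀ ε > 0, Tendsto (fun i => μ {ω | ε * ‖b i‖ < ‖Z ω i‖}) l (𝓝 0) := by
  have hlaw : ∀ s, MeasurableSet s → μ (Z ⁻¹' s) = μ.map Z s := fun s hs =>
    (Measure.map_apply_of_aemeasurable hid.aemeasurable_fst hs).symm
  have hlaw' : ∀ s, MeasurableSet s → μ (Z ⁻¹' s) = μ.map Z' s := fun s hs =>
    (hid.measure_mem_eq hs).trans (Measure.map_apply_of_aemeasurable hid.aemeasurable_snd hs).symm
  have hZ := ae_map_iff hid.aemeasurable_fst (measurableSet_setOf_isLittleO (l := l) measurable_id b)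
  constructor
  · intro h
    refine ⟨?_, fun ε hε => ?_⟩
    · filter_upwards [h, hid.ae_snd (measurableSet_setOf_isLittleO (l := l) measurable_id b) h]
        with ω h h' using h.sub h'
    · exact (tendsto_measure_lt_norm_of_ae_isLittleO (hZ.2 h) hε).congr fun i =>
        (hlaw _ (measurableSet_lt_norm_apply _ i)).symm
  · rintro ⟨hsub, hprob⟩
    have hpair : μ.map (fun ω => (Z ω, Z' ω)) = (μ.map Z).prod (μ.map Z') :=
      (indepFun_iff_map_prod_eq_prod_map_map hid.aemeasurable_fst hid.aemeasurable_snd).1 hind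
    have hsub_prod : ∀ᵐ p ∂(μ.map Z).prod (μ.map Z'), (p.1 - p.2) =o[l] b := by
      rw [← hpair]
      exact (ae_map_iff (hid.aemeasurable_fst.prodMk hid.aemeasurable_snd)
        (measurableSet_setOf_isLittleO (f := fun p : (ι → E) × (ι → E) => p.1 - p.2)
          (measurable_fst.sub measurable_snd) b)).2 hsub
    have := Measure.isProbabilityMeasure_map (μ := μ) hid.aemeasurable_snd
    refine hZ.1 ((Measure.ae_ae_of_ae_prod hsub_prod).mono fun x hx =>
      isLittleO_of_ae_isLittleO_sub hx fun ε hε => ?_)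
    exact (hprob ε hε).congr fun i => hlaw' _ (measurableSet_lt_norm_apply _ i)

end Desymmetrization

section Blocks

variable {Ω : Type*} [MeasurableSpace Ω] {μ : Measure Ω} {𝓧 : Type*} [MeasurableSpace 𝓧]

lemma iIndepFun_curry {ι κ : Type*} {X : ι → κ → Ω → 𝓧}
    (mX : ∀ i j, Measurable (X i j)) (h : iIndepFun (fun p : ι × κ => X p.1 p.2) μ) :
    iIndepFun (fun i ω => (X i · ω)) μ := by
  have := h.isProbabilityMeasure
  have (i : ι) (j : κ) := Measure.isProbabilityMeasure_map (μ := μ) (mX i j).aemeasurable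
  have hcurry : μ.map (fun ω i j => X i j ω) =
      Measure.infinitePi fun i => Measure.infinitePi fun j => μ.map (X i j) := by
    rw [← Measure.infinitePi_map_curry,
      ← h.map_fun_eq_infinitePi_map fun p : ι × κ => mX p.1 p.2,
      Measure.map_map (by fun_prop) (by fun_prop)]
    rfl
  rw [iIndepFun_iff_map_fun_eq_infinitePi_map (by fun_prop), hcurry]
  congr 1
  funext i
  rw [← Measure.infinitePi_map_eval (fun i => Measure.infinitePi fun j => μ.map (X i j)) i,
    ← hcurry, Measure.map_map (by fun_prop) (by fun_prop)]
  rfl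

variable {ι : Type*} {X Y : ι → Ω → 𝓧}

lemma indepFun_of_iIndepFun_ite (hX : ∀ i, Measurable (X i)) (hY : ∀ i, Measurable (Y i))
    (h : iIndepFun (fun r : ι × Bool => if r.2 then X r.1 else Y r.1) μ) :
    IndepFun (fun ω i => X i ω) (fun ω i => Y i ω) μ := by
  have hblocks := iIndepFun_curry (X := fun (b : Bool) i => if b then X i else Y i)
    (fun b i => by cases b <;> simp [hX, hY]) (h.precomp Prod.swap_injective)
  simpa using hblocks.indepFun (i := true) (j := false) (by decide)

lemma identDistrib_of_iIndepFun_ite (hX : ∀ i, Measurable (X i)) (hY : ∀ i, Measurable (Y i))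
    (h : iIndepFun (fun r : ι × Bool => if r.2 then X r.1 else Y r.1) μ)
    (hid : ∀ i, μ.map (X i) = μ.map (Y i)) :
    IdentDistrib (fun ω i => X i ω) (fun ω i => Y i ω) μ μ where
  aemeasurable_fst := (measurable_pi_lambda _ hX).aemeasurable
  aemeasurable_snd := (measurable_pi_lambda _ hY).aemeasurable
  map_eq := by
    have hXind : iIndepFun X μ := by
      simpa using h.precomp (g := fun i => (i, true)) fun i j hij => congrArg Prod.fst hij
    have hYind : iIndepFun Y μ := by
      simpa using h.precomp (g := fun i => (i, false)) fun i j hij => congrArg Prod.fst hij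
    rw [hXind.map_fun_eq_infinitePi_map hX, hYind.map_fun_eq_infinitePi_map hY]
    simp only [hid]

end Blocks

/-- The limit `m ∨ n → ∞`, taken over indices `m, n ≥ 1`. -/
def maxAtTop : Filter (ℕ × ℕ) :=
  atTop.comap (fun q => max q.1 q.2) ⊓ 𝓟 {q | 1 ≤ q.1 ∧ 1 ≤ q.2}

instance : maxAtTop.IsCountablyGenerated := by
  unfold maxAtTop
  infer_instance

lemma eventually_maxAtTop {p : ℕ × ℕ → Prop} :
    (∀ᶠ q in maxAtTop, p q) ↔ ∃ N, ∀ m n, 1 ≤ m → 1 ≤ n → N ≤ max m n → p (m, n) := by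
  simp only [maxAtTop, eventually_inf_principal, eventually_comap, eventually_atTop,
    Set.mem_ofPred_eq, Prod.forall]
  refine exists_congr fun N => ⟨fun h m n hm hn hN => h _ hN m n rfl ⟨hm, hn⟩,
    fun h k hk m n hmn hmn' => h m n hmn'.1 hmn'.2 (hmn ▸ hk)⟩

lemma isLittleO_maxAtTop_iff {E : Type*} [NormedAddCommGroup E] {g : ℕ × ℕ → E} {b : ℕ × ℕ → ℝ}
    (hb : ∀ m n, 1 ≤ m → 1 ≤ n → 0 < b (m, n)) :
    g =o[maxAtTop] b ↔
      ∀ ε > 0, ∃ N, ∀ m n, 1 ≤ m → 1 ≤ n → N ≤ max m n → ‖g (m, n)‖ < ε * b (m, n) := by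
  rw [isLittleO_iff_forall_lt (eventually_maxAtTop.2 ⟨0, fun m n hm hn _ => hb m n hm hn⟩)]
  simp only [eventually_maxAtTop]

lemma ENNReal.tendsto_nhds_zero_iff_toReal_lt {ι : Type*} {l : Filter ι} {f : ι → ℝ≥0∞}
    (hf : ∀ i, f i ≠ ∞) : Tendsto f l (𝓝 0) ↔ ∀ δ > 0, ∀ᶠ i in l, (f i).toReal < δ := by
  rw [← ENNReal.tendsto_toReal_iff hf ENNReal.zero_ne_top, ENNReal.toReal_zero,
    Metric.tendsto_nhds]
  simp only [Real.dist_eq, sub_zero, abs_of_nonneg ENNReal.toReal_nonneg]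

section RectSum

variable {E : Type*} [AddCommMonoid E]

def rectSum (x : ℕ × ℕ → E) (q : ℕ × ℕ) : E :=
  ∑ i ∈ Icc 1 q.1, ∑ j ∈ Icc 1 q.2, x (i, j)

lemma measurable_rectSum [MeasurableSpace E] [MeasurableAdd₂ E] :
    Measurable (rectSum : (ℕ × ℕ → E) → ℕ × ℕ → E) :=
  measurable_pi_lambda _ fun _ => Finset.measurable_sum _ fun i _ =>
    Finset.measurable_sum _ fun j _ => measurable_pi_apply (i, j)

end RectSum

theorem stmt13_general
    {Ω : Type*} [MeasurableSpace Ω] (μ : Measure Ω) [IsProbabilityMeasure μ]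
    {E : Type*} [NormedAddCommGroup E] [MeasurableSpace E] [BorelSpace E]
    [SecondCountableTopology E]
    (α β : ℝ)
    (V V' : ℕ → ℕ → Ω → E)
    (hmeas : ∀ m n, Measurable (V m n)) (hmeas' : ∀ m n, Measurable (V' m n))
    (hindep : iIndepFun
      (fun r : (ℕ × ℕ) × Bool => if r.2 then V r.1.1 r.1.2 else V' r.1.1 r.1.2) μ)
    (hid : ∀ m n, Measure.map (V m n) μ = Measure.map (V' m n) μ) :
    (∀ᵐ ω ∂μ, ∀ ε > (0 : ℝ), ∃ N : ℕ, ∀ m n : ℕ, 1 ≤ m → 1 ≤ n → N ≤ max m n →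
        ‖∑ i ∈ Finset.Icc 1 m, ∑ j ∈ Finset.Icc 1 n, V i j ω‖ <
          ε * ((m : ℝ) ^ α * (n : ℝ) ^ β))
    ↔
    ((∀ᵐ ω ∂μ, ∀ ε > (0 : ℝ), ∃ N : ℕ, ∀ m n : ℕ, 1 ≤ m → 1 ≤ n → N ≤ max m n →
        ‖∑ i ∈ Finset.Icc 1 m, ∑ j ∈ Finset.Icc 1 n, (V i j ω - V' i j ω)‖ <
          ε * ((m : ℝ) ^ α * (n : ℝ) ^ β)) ∧
      (∀ ε > (0 : ℝ), ∀ δ > (0 : ℝ), ∃ N : ℕ, ∀ m n : ℕ, 1 ≤ m → 1 ≤ n → N ≤ max m n →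
        (μ {ω | ε * ((m : ℝ) ^ α * (n : ℝ) ^ β) <
          ‖∑ i ∈ Finset.Icc 1 m, ∑ j ∈ Finset.Icc 1 n, V i j ω‖}).toReal < δ)) := by
  have hX : ∀ p : ℕ × ℕ, Measurable (V p.1 p.2) := fun p => hmeas p.1 p.2
  have hY : ∀ p : ℕ × ℕ, Measurable (V' p.1 p.2) := fun p => hmeas' p.1 p.2
  have key := ae_isLittleO_iff_of_indepFun_of_identDistrib (l := maxAtTop)
    (b := fun q => (q.1 : ℝ) ^ α * (q.2 : ℝ) ^ β)
    ((indepFun_of_iIndepFun_ite hX hY hindep).comp measurable_rectSum measurable_rectSum)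
    ((identDistrib_of_iIndepFun_ite hX hY hindep fun p => hid p.1 p.2).comp measurable_rectSum)
  have hb : ∀ m n : ℕ, 1 ≤ m → 1 ≤ n → 0 < (m : ℝ) ^ α * (n : ℝ) ^ β := fun m n hm hn =>
    mul_pos (Real.rpow_pos_of_pos (by exact_mod_cast hm) _)
      (Real.rpow_pos_of_pos (by exact_mod_cast hn) _)
  simp only [isLittleO_maxAtTop_iff (b := fun q => (q.1 : ℝ) ^ α * (q.2 : ℝ) ^ β) hb,
    ENNReal.tendsto_nhds_zero_iff_toReal_lt fun _ => measure_ne_top _ _, eventually_maxAtTop,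
    Function.comp_apply, rectSum, Pi.sub_apply, norm_mul, Real.norm_eq_abs,
    Real.abs_rpow_of_nonneg, Nat.cast_nonneg, Nat.abs_cast] at key
  simpa only [sum_sub_distrib] using key

theorem stmt13
    {Ω : Type*} [MeasurableSpace Ω] (μ : Measure Ω) [IsProbabilityMeasure μ]
    {E : Type*} [NormedAddCommGroup E] [MeasurableSpace E] [BorelSpace E]
    [SecondCountableTopology E]
    (α β : ℝ) (hα : 0 < α) (hβ : 0 < β)
    (V V' : ℕ → ℕ → Ω → E)
    (hmeas : ∀ m n, Measurable (V m n)) (hmeas' : ∀ m n, Measurable (V' m n))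
    (hindep : iIndepFun
      (fun r : (ℕ × ℕ) × Bool => if r.2 then V r.1.1 r.1.2 else V' r.1.1 r.1.2) μ)
    (hid : ∀ m n, Measure.map (V m n) μ = Measure.map (V' m n) μ) :
    (∀ᵐ ω ∂μ, ∀ ε > (0 : ℝ), ∃ N : ℕ, ∀ m n : ℕ, 1 ≤ m → 1 ≤ n → N ≤ max m n →
        ‖∑ i ∈ Finset.Icc 1 m, ∑ j ∈ Finset.Icc 1 n, V i j ω‖ <
          ε * ((m : ℝ) ^ α * (n : ℝ) ^ β))
    ↔
    ((∀ᵐ ω ∂μ, ∀ ε > (0 : ℝ), ∃ N : ℕ, ∀ m n : ℕ, 1 ≤ m → 1 ≤ n → N ≤ max m n →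
        ‖∑ i ∈ Finset.Icc 1 m, ∑ j ∈ Finset.Icc 1 n, (V i j ω - V' i j ω)‖ <
          ε * ((m : ℝ) ^ α * (n : ℝ) ^ β)) ∧
      (∀ ε > (0 : ℝ), ∀ δ > (0 : ℝ), ∃ N : ℕ, ∀ m n : ℕ, 1 ≤ m → 1 ≤ n → N ≤ max m n →
        (μ {ω | ε * ((m : ℝ) ^ α * (n : ℝ) ^ β) <
          ‖∑ i ∈ Finset.Icc 1 m, ∑ j ∈ Finset.Icc 1 n, V i j ω‖}).toReal < δ)) :=
  stmt13_general μ α β V V' hmeas hmeas' hindep hid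
end

section
/- Let p ≥ 1 and let {V_{mn}} be a double array of independent real-valued random variables with ∑_{m,n} E|S_{mn}|^p/(mn)^{p+1} < ∞, where S_{mn} = ∑_{i≤m} ∑_{j≤n} V_{ij}. Then S_{mn}/(mn) → 0 in probability as m ∨ n → ∞: for every ε > 0, P(|S_{mn}| > ε mn) → 0 as max(m,n) → ∞. -/
/-!
Since the `V i j` are independent and centred, adding further summands can only increase
`E |S|^p` (Jensen's inequality for the convex function `|·|^p`, applied conditionally on the
first partial sum). Hence `c m n := E |S_{mn}|^p` is monotone in both indices, and every term of
the block `[m, 2m) × [n, 2n)` of the convergent series dominates `c m n / (4mn)^(p+1)`; there are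
`mn` such terms, so `c m n / (mn)^p ≤ 4^(p+1)` times a tail of the series, which tends to `0` as
`max m n → ∞`. Markov's inequality for `|S_{mn}|^p` finishes the proof.
-/

open MeasureTheory ProbabilityTheory Finset

theorem convexOn_abs_rpow {p : ℝ} (hp : 1 ≤ p) : ConvexOn ℝ Set.univ fun t : ℝ => |t| ^ p := by
  have himg : (fun t : ℝ => ‖t‖) '' Set.univ = Set.Ici 0 := by
    ext x; simp only [Set.image_univ, Set.mem_range, Set.mem_Ici]
    exact ⟨fun ⟨t, ht⟩ => ht ▸ norm_nonneg t, fun hx => ⟨x, by simp [abs_of_nonneg hx]⟩⟩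
  refine (himg ▸ convexOn_rpow hp).comp convexOn_univ_norm ?_
  exact himg ▸ Real.monotoneOn_rpow_Ici_of_exponent_nonneg (by linarith)

namespace MeasureTheory

variable {Ω : Type*} [MeasurableSpace Ω] {μ : Measure Ω}

theorem memLp_ofReal_iff_integrable_abs_rpow {f : Ω → ℝ} {p : ℝ} (hp : 0 < p)
    (hf : AEStronglyMeasurable f μ) :
    MemLp f (ENNReal.ofReal p) μ ↔ Integrable (fun ω => |f ω| ^ p) μ := by
  rw [← integrable_norm_rpow_iff hf (by simpa using hp) ENNReal.ofReal_ne_top,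
    ENNReal.toReal_ofReal hp.le]
  rfl

theorem integrable_abs_rpow_finsetSum {ι : Type*} {X : ι → Ω → ℝ} {p : ℝ} (hp : 0 < p)
    (hX : ∀ i, AEStronglyMeasurable (X i) μ) (hXp : ∀ i, Integrable (fun ω => |X i ω| ^ p) μ)
    (s : Finset ι) : Integrable (fun ω => |∑ i ∈ s, X i ω| ^ p) μ := by
  have hmem : MemLp (fun ω => ∑ i ∈ s, X i ω) (ENNReal.ofReal p) μ :=
    memLp_finsetSum s fun i _ => (memLp_ofReal_iff_integrable_abs_rpow hp (hX i)).2 (hXp i)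
  exact (memLp_ofReal_iff_integrable_abs_rpow hp hmem.aestronglyMeasurable).1 hmem

theorem measureReal_lt_abs_le_integral_abs_rpow_div [IsFiniteMeasure μ] {Z : Ω → ℝ} {t p : ℝ}
    (ht : 0 < t) (hp : 0 ≤ p) (hZ : Integrable (fun ω => |Z ω| ^ p) μ) :
    μ.real {ω | t < |Z ω|} ≤ (∫ ω, |Z ω| ^ p ∂μ) / t ^ p := by
  rw [le_div_iff₀' (by positivity)]
  calc t ^ p * μ.real {ω | t < |Z ω|} ≤ t ^ p * μ.real {ω | t ^ p ≤ |Z ω| ^ p} := by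
        gcongr
        · finiteness
        · exact fun hω => Real.rpow_le_rpow ht.le (le_of_lt hω) hp
    _ ≤ ∫ ω, |Z ω| ^ p ∂μ :=
        mul_meas_ge_le_integral_of_nonneg (.of_forall fun ω => by positivity) hZ _

end MeasureTheory

namespace ProbabilityTheory

variable {Ω : Type*} [MeasurableSpace Ω] {μ : Measure Ω} [IsProbabilityMeasure μ]

/-- Jensen's inequality applied conditionally on `X`: averaging `φ (x + Y)` over the law of `Y`
gives at least `φ (x + E Y) = φ x`. -/
theorem IndepFun.integral_comp_le_integral_comp_add {X Y : Ω → ℝ} {φ : ℝ → ℝ}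
    (hφ : ConvexOn ℝ Set.univ φ) (hXY : IndepFun X Y μ) (hX : AEMeasurable X μ)
    (hY : Integrable Y μ) (hY0 : μ[Y] = 0)
    (hφX : Integrable (fun ω => φ (X ω)) μ) (hφXY : Integrable (fun ω => φ (X ω + Y ω)) μ) :
    ∫ ω, φ (X ω) ∂μ ≤ ∫ ω, φ (X ω + Y ω) ∂μ := by
  have hφc : Continuous φ := continuousOn_univ.mp (hφ.continuousOn isOpen_univ)
  set ν₁ := μ.map X
  set ν₂ := μ.map Y
  have hmap : μ.map (fun ω => (X ω, Y ω)) = ν₁.prod ν₂ :=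
    (indepFun_iff_map_prod_eq_prod_map_map hX hY.aemeasurable).mp hXY
  have hG : Continuous (fun z : ℝ × ℝ => φ (z.1 + z.2)) := by fun_prop
  have hGi : Integrable (fun z : ℝ × ℝ => φ (z.1 + z.2)) (ν₁.prod ν₂) := by
    rw [← hmap, integrable_map_measure hG.aestronglyMeasurable (hX.prodMk hY.aemeasurable)]
    exact hφXY
  have : IsProbabilityMeasure ν₂ := Measure.isProbabilityMeasure_map hY.aemeasurable
  have hν₂ : Integrable (fun y => y) ν₂ :=
    (integrable_map_measure aestronglyMeasurable_id hY.aemeasurable).mpr hY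
  have hν₂0 : ∫ y, y ∂ν₂ = 0 :=
    (integral_map hY.aemeasurable aestronglyMeasurable_id).trans hY0
  have hjensen : ∀ᵐ x ∂ν₁, φ x ≤ ∫ y, φ (x + y) ∂ν₂ := by
    filter_upwards [hGi.prod_right_ae] with x hx
    have h := hφ.map_integral_le (f := fun y => x + y) hφc.continuousOn isClosed_univ
      (.of_forall fun _ => Set.mem_univ _) ((integrable_const x).add hν₂) hx
    rwa [integral_add (integrable_const x) hν₂, hν₂0, integral_const, probReal_univ,
      one_smul, add_zero] at h
  calc ∫ ω, φ (X ω) ∂μ = ∫ x, φ x ∂ν₁ := (integral_map hX hφc.aestronglyMeasurable).symm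
    _ ≤ ∫ x, ∫ y, φ (x + y) ∂ν₂ ∂ν₁ :=
        integral_mono_ae ((integrable_map_measure hφc.aestronglyMeasurable hX).mpr hφX)
          hGi.integral_prod_left hjensen
    _ = ∫ ω, φ (X ω + Y ω) ∂μ := by
        rw [← integral_prod _ hGi, ← hmap,
          integral_map (hX.prodMk hY.aemeasurable) hG.aestronglyMeasurable]

theorem iIndepFun.integral_comp_sum_mono {ι : Type*} {X : ι → Ω → ℝ} {φ : ℝ → ℝ}
    (hφ : ConvexOn ℝ Set.univ φ) (hX : iIndepFun X μ) (hint : ∀ i, Integrable (X i) μ)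
    (hmean : ∀ i, μ[X i] = 0) {F G : Finset ι} (hFG : F ⊆ G)
    (hφF : Integrable (fun ω => φ (∑ i ∈ F, X i ω)) μ)
    (hφG : Integrable (fun ω => φ (∑ i ∈ G, X i ω)) μ) :
    ∫ ω, φ (∑ i ∈ F, X i ω) ∂μ ≤ ∫ ω, φ (∑ i ∈ G, X i ω) ∂μ := by
  classical
  have hmeas : ∀ i, AEMeasurable (X i) μ := fun i => (hint i).aemeasurable
  have hsplit : ∀ ω, ∑ i ∈ G, X i ω = ∑ i ∈ F, X i ω + ∑ i ∈ G \ F, X i ω := fun ω => by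
    rw [← sum_sdiff hFG, add_comm]
  have hind : IndepFun (fun ω => ∑ i ∈ F, X i ω) (fun ω => ∑ i ∈ G \ F, X i ω) μ := by
    have h := (hX.indepFun_finset₀ F (G \ F) disjoint_sdiff hmeas).comp
      (φ := fun v => ∑ i, v i) (ψ := fun v => ∑ i, v i) (by fun_prop) (by fun_prop)
    convert h using 1 <;> funext ω <;> exact (sum_coe_sort _ fun i => X i ω).symm
  simp_rw [hsplit] at hφG ⊢
  exact hind.integral_comp_le_integral_comp_add hφ
    (Finset.aemeasurable_fun_sum _ fun i _ => hmeas i) (integrable_finsetSum _ fun i _ => hint i)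
    (by rw [integral_finsetSum _ fun i _ => hint i]; exact sum_eq_zero fun i _ => hmean i)
    hφF hφG

end ProbabilityTheory

/-- The indices `q` of the sum run over `[m - 1, 2m - 1) × [n - 1, 2n - 1)`, so that
`(q.1 + 1, q.2 + 1)` runs over the block `[m, 2m) × [n, 2n)`. -/
theorem div_rpow_le_four_rpow_mul_sum_block {c : ℕ → ℕ → ℝ} {p : ℝ} (hp : 0 ≤ p + 1)
    (hc : ∀ m n, 0 ≤ c m n) (hmono : ∀ ⦃m n m' n'⦄, m ≤ m' → n ≤ n' → c m n ≤ c m' n')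
    {m n : ℕ} (hm : 1 ≤ m) (hn : 1 ≤ n) :
    c m n / ((m : ℝ) * n) ^ p ≤ 4 ^ (p + 1) *
      ∑ q ∈ Ico (m - 1) (2 * m - 1) ×ˢ Ico (n - 1) (2 * n - 1),
        c (q.1 + 1) (q.2 + 1) / (((q.1 + 1 : ℕ) : ℝ) * ((q.2 + 1 : ℕ) : ℝ)) ^ (p + 1) := by
  have hmn : (0 : ℝ) < m * n := by positivity
  have hcard : #(Ico (m - 1) (2 * m - 1) ×ˢ Ico (n - 1) (2 * n - 1)) = m * n := by
    rw [card_product, Nat.card_Ico, Nat.card_Ico]; congr 1 <;> omega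
  have hterm : ∀ q ∈ Ico (m - 1) (2 * m - 1) ×ˢ Ico (n - 1) (2 * n - 1),
      c m n / (4 * ((m : ℝ) * n)) ^ (p + 1) ≤
        c (q.1 + 1) (q.2 + 1) / (((q.1 + 1 : ℕ) : ℝ) * ((q.2 + 1 : ℕ) : ℝ)) ^ (p + 1) := by
    intro q hq
    simp only [mem_product, mem_Ico] at hq
    have h1 : ((q.1 + 1 : ℕ) : ℝ) ≤ 2 * m := by exact_mod_cast (by omega : q.1 + 1 ≤ 2 * m)
    have h2 : ((q.2 + 1 : ℕ) : ℝ) ≤ 2 * n := by exact_mod_cast (by omega : q.2 + 1 ≤ 2 * n)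
    refine div_le_div₀ (hc _ _) (hmono (by omega) (by omega)) (by positivity) ?_
    exact Real.rpow_le_rpow (by positivity) (by nlinarith [h1, h2]) hp
  have hsum := card_nsmul_le_sum _ _ _ hterm
  rw [hcard, nsmul_eq_mul, Nat.cast_mul, Real.mul_rpow (by norm_num) hmn.le,
    Real.rpow_add_one hmn.ne'] at hsum
  calc c m n / ((m : ℝ) * n) ^ p
      = 4 ^ (p + 1) * ((m * n) * (c m n / (4 ^ (p + 1) * (((m : ℝ) * n) ^ p * (m * n))))) := by
        field_simp
    _ ≤ _ := by gcongr

theorem exists_forall_div_rpow_lt_of_summable {c : ℕ → ℕ → ℝ} {p : ℝ} (hp : 0 ≤ p + 1)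
    (hc : ∀ m n, 0 ≤ c m n) (hmono : ∀ ⦃m n m' n'⦄, m ≤ m' → n ≤ n' → c m n ≤ c m' n')
    (hsum : Summable fun q : ℕ × ℕ =>
      c (q.1 + 1) (q.2 + 1) / (((q.1 + 1 : ℕ) : ℝ) * ((q.2 + 1 : ℕ) : ℝ)) ^ (p + 1))
    {η : ℝ} (hη : 0 < η) :
    ∃ N : ℕ, ∀ m n : ℕ, 1 ≤ m → 1 ≤ n → N ≤ max m n → c m n / ((m : ℝ) * n) ^ p < η := by
  obtain ⟨s, hs⟩ := summable_iff_vanishing_norm.1 hsum (η / 4 ^ (p + 1)) (by positivity)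
  refine ⟨s.sup (fun q => max q.1 q.2) + 2, fun m n hm hn hN => ?_⟩
  have hdisj : Disjoint (Ico (m - 1) (2 * m - 1) ×ˢ Ico (n - 1) (2 * n - 1)) s := by
    refine disjoint_left.2 fun q hq hqs => ?_
    have := le_sup (f := fun q : ℕ × ℕ => max q.1 q.2) hqs
    simp only [mem_product, mem_Ico] at hq
    omega
  have htail := (le_abs_self _).trans_lt ((Real.norm_eq_abs _).symm ▸ hs _ hdisj)
  calc c m n / ((m : ℝ) * n) ^ p ≤ 4 ^ (p + 1) * _ :=
        div_rpow_le_four_rpow_mul_sum_block hp hc hmono hm hn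
    _ < 4 ^ (p + 1) * (η / 4 ^ (p + 1)) := by gcongr
    _ = η := by field_simp

theorem stmt15
    {Ω : Type*} [MeasurableSpace Ω] (μ : Measure Ω) [IsProbabilityMeasure μ]
    (V : ℕ → ℕ → Ω → ℝ) (p : ℝ) (hp : 1 ≤ p)
    (hindep : iIndepFun (fun q : ℕ × ℕ => V q.1 q.2) μ)
    (hint : ∀ m n, Integrable (V m n) μ)
    (hmean : ∀ m n, ∫ ω, V m n ω ∂μ = 0)
    (hmom : ∀ m n : ℕ, Integrable (fun ω => |V m n ω| ^ p) μ)
    (hsum : Summable (fun q : ℕ × ℕ =>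
      (∫ ω, |∑ i ∈ Finset.Icc 1 (q.1 + 1), ∑ j ∈ Finset.Icc 1 (q.2 + 1), V i j ω| ^ p ∂μ) /
        (((q.1 + 1 : ℕ) : ℝ) * ((q.2 + 1 : ℕ) : ℝ)) ^ (p + 1))) :
    ∀ ε > (0 : ℝ), ∀ δ > (0 : ℝ), ∃ N : ℕ, ∀ m n : ℕ, 1 ≤ m → 1 ≤ n → N ≤ max m n →
      (μ {ω | ε * ((m : ℝ) * n) <
        |∑ i ∈ Finset.Icc 1 m, ∑ j ∈ Finset.Icc 1 n, V i j ω|}).toReal < δ := by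
  intro ε hε δ hδ
  have hp0 : 0 < p := by linarith
  have hS : ∀ m n, ∀ ω, ∑ i ∈ Icc 1 m, ∑ j ∈ Icc 1 n, V i j ω =
      ∑ q ∈ Icc 1 m ×ˢ Icc 1 n, V q.1 q.2 ω := fun m n ω => (sum_product' _ _ _).symm
  have hSp : ∀ F : Finset (ℕ × ℕ), Integrable (fun ω => |∑ q ∈ F, V q.1 q.2 ω| ^ p) μ :=
    integrable_abs_rpow_finsetSum hp0 (fun q => (hint q.1 q.2).1) fun q => hmom q.1 q.2
  have hmono : ∀ ⦃m n m' n' : ℕ⦄, m ≤ m' → n ≤ n' →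
      ∫ ω, |∑ i ∈ Icc 1 m, ∑ j ∈ Icc 1 n, V i j ω| ^ p ∂μ ≤
        ∫ ω, |∑ i ∈ Icc 1 m', ∑ j ∈ Icc 1 n', V i j ω| ^ p ∂μ := by
    intro m n m' n' hm hn
    simp only [hS]
    exact hindep.integral_comp_sum_mono (convexOn_abs_rpow hp) (fun q => hint q.1 q.2)
      (fun q => hmean q.1 q.2) (product_subset_product (Icc_subset_Icc_right hm)
        (Icc_subset_Icc_right hn)) (hSp _) (hSp _)
  obtain ⟨N, hN⟩ := exists_forall_div_rpow_lt_of_summable (by linarith)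
    (fun m n => integral_nonneg fun ω => by positivity) hmono hsum (η := δ * ε ^ p) (by positivity)
  refine ⟨N, fun m n hm hn hNmn => ?_⟩
  have hmn : (0 : ℝ) < m * n := by positivity
  calc (μ _).toReal ≤ (∫ ω, |∑ i ∈ Icc 1 m, ∑ j ∈ Icc 1 n, V i j ω| ^ p ∂μ) / (ε * (m * n)) ^ p :=
        measureReal_lt_abs_le_integral_abs_rpow_div (by positivity) hp0.le
          (by simpa only [hS] using hSp (Icc 1 m ×ˢ Icc 1 n))
    _ = (∫ ω, |∑ i ∈ Icc 1 m, ∑ j ∈ Icc 1 n, V i j ω| ^ p ∂μ) / ((m : ℝ) * n) ^ p / ε ^ p := by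
        rw [Real.mul_rpow hε.le hmn.le, div_div, mul_comm]
    _ < δ := (div_lt_iff₀ (by positivity)).2 (hN m n hm hn hNmn)
end
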